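/- arXiv:2304.11429 — 2 statements merged into one kernel-verified Lean document; each statement's English description precedes it below -/
import Mathlib

section
/- For a ray r with apex p and unit direction u, define the algebraic distance d_alg(x, r) as follows: d_alg(p, r) = 0; for x ≠ p, let w = (x − p)/‖x − p‖, c = ⟪u, w⟫, and σ = ω(u, w) the value of the standard area form (orientation) of ℝ² on the pair (u, w); set d_alg(x, r) = 1 − c if σ ≥ 0, and d_alg(x, r) = 3 + c if σ < 0. Then for any two rays r and s with unit direction vectors and every point x ∈ ℝ²: d∠(x, r) < d∠(x, s) if and only if d_alg(x, r) < d_alg(x, s). -/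
noncomputable section

open Real

abbrev Pt : Type := EuclideanSpace ℝ (Fin 2)

instance : Fact (Module.finrank ℝ Pt = 2) := ⟨finrank_euclideanSpace_fin⟩

noncomputable def stdOrient : Orientation ℝ Pt (Fin 2) :=
  (EuclideanSpace.basisFun (Fin 2) ℝ).toBasis.orientation

/-- A ray in the plane, given by its apex and its direction vector. -/
structure Ray2 where
  apex : Pt
  dir : Pt

/-- The set of points of a ray. -/
def Ray2.carrier (r : Ray2) : Set Pt := {x | ∃ t : ℝ, 0 ≤ t ∧ x = r.apex + t • r.dir}

/-- The representative in `[0, 2π)` of an angle. -/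
noncomputable def angleIco (θ : Real.Angle) : ℝ :=
  if 0 ≤ θ.toReal then θ.toReal else θ.toReal + 2 * π

open Classical in
/-- The counterclockwise angular distance from a point `x` to a ray `r`. -/
noncomputable def adist (x : Pt) (r : Ray2) : ℝ :=
  if x = r.apex then 0 else angleIco (stdOrient.oangle r.dir (x - r.apex))

/-- The Voronoi region of a ray `r` in a finite set of rays `R`. -/
def rreg (R : Finset Ray2) (r : Ray2) : Set Pt :=
  {x | ∀ s ∈ R, s ≠ r → adist x r < adist x s}

/-- The rotating rays Voronoi diagram. -/
def RVD (R : Finset Ray2) : Set Pt :=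
  (Set.univ \ ⋃ r ∈ R, rreg R r) ∪ ⋃ r ∈ R, r.carrier

/-- The point of the plane with the given coordinates. -/
noncomputable def pt (a b : ℝ) : Pt := (WithLp.equiv 2 (Fin 2 → ℝ)).symm ![a, b]

open Classical in
/-- The piecewise-algebraic surrogate of the angular distance. -/
noncomputable def dalg (x : Pt) (r : Ray2) : ℝ :=
  if x = r.apex then 0
  else
    if 0 ≤ stdOrient.areaForm r.dir (‖x - r.apex‖⁻¹ • (x - r.apex)) then
      1 - (inner ℝ r.dir (‖x - r.apex‖⁻¹ • (x - r.apex)) : ℝ)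
    else
      3 + (inner ℝ r.dir (‖x - r.apex‖⁻¹ • (x - r.apex)) : ℝ)

/-! For a unit direction, the area form and the inner product in `dalg` are the sine and the
cosine of the angle `θ = d∠ ∈ [0, 2π)`, so `dalg = dalgOfAngle θ`, which is `1 - cos θ` on `[0, π]`
and `3 + cos θ` on `[π, 2π)`. Both branches are strictly increasing and take the value `2` at `π`,
so `dalgOfAngle` is strictly increasing on `[0, 2π)`. -/

open Set

theorem Orientation.areaForm_eq_norm_mul_norm_mul_sin_oangle {V : Type*}
    [NormedAddCommGroup V] [InnerProductSpace ℝ V] [Fact (Module.finrank ℝ V = 2)]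
    (o : Orientation ℝ V (Fin 2)) (x y : V) :
    o.areaForm x y = ‖x‖ * ‖y‖ * Real.Angle.sin (o.oangle x y) := by
  by_cases hx : x = 0; · simp [hx]
  by_cases hy : y = 0; · simp [hy]
  rw [Orientation.oangle, Real.Angle.sin_coe, Complex.sin_arg, o.norm_kahler]
  simp only [Orientation.kahler_apply_apply, Complex.add_im, Complex.ofReal_im,
    Complex.real_smul, Complex.mul_im, Complex.ofReal_re, Complex.I_im, Complex.I_re,
    mul_zero, mul_one, zero_add, add_zero]
  field_simp

theorem angleIco_mem_Ico (θ : Real.Angle) : angleIco θ ∈ Ico 0 (2 * π) := by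
  have := θ.neg_pi_lt_toReal
  have := θ.toReal_le_pi
  unfold angleIco
  split_ifs <;> constructor <;> linarith

theorem coe_angleIco (θ : Real.Angle) : (angleIco θ : Real.Angle) = θ := by
  unfold angleIco
  split_ifs
  · exact θ.coe_toReal
  · rw [Real.Angle.coe_add, Real.Angle.coe_two_pi, add_zero, θ.coe_toReal]

theorem adist_mem_Ico (x : Pt) (r : Ray2) : adist x r ∈ Ico 0 (2 * π) := by
  unfold adist
  split_ifs
  · exact ⟨le_rfl, by positivity⟩
  · exact angleIco_mem_Ico _

def dalgOfAngle (θ : ℝ) : ℝ :=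
  if 0 ≤ sin θ then 1 - cos θ else 3 + cos θ

theorem dalgOfAngle_eqOn_Icc : EqOn dalgOfAngle (fun θ ↦ 1 - cos θ) (Icc 0 π) :=
  fun _ hθ ↦ if_pos (sin_nonneg_of_nonneg_of_le_pi hθ.1 hθ.2)

theorem dalgOfAngle_eqOn_Ico : EqOn dalgOfAngle (fun θ ↦ 3 + cos θ) (Ico π (2 * π)) := by
  intro θ ⟨hπ, h2π⟩
  rcases hπ.eq_or_lt with rfl | hπ
  · norm_num [dalgOfAngle]
  have : sin θ < 0 := by
    rw [← sin_sub_two_pi]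
    exact sin_neg_of_neg_of_neg_pi_lt (by linarith) (by linarith)
  exact if_neg this.not_ge

theorem strictMonoOn_dalgOfAngle : StrictMonoOn dalgOfAngle (Ico 0 (2 * π)) := by
  have hlow : StrictMonoOn dalgOfAngle (Icc 0 π) := by
    refine StrictMonoOn.congr ?_ dalgOfAngle_eqOn_Icc.symm
    exact fun a ha b hb hab ↦ sub_lt_sub_left (strictAntiOn_cos ha hb hab) 1
  have hhigh : StrictMonoOn dalgOfAngle (Ico π (2 * π)) := by
    refine StrictMonoOn.congr ?_ dalgOfAngle_eqOn_Ico.symm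
    intro a ⟨ha, ha'⟩ b ⟨hb, hb'⟩ hab
    have := strictAntiOn_cos (show a - π ∈ Icc 0 π from ⟨by linarith, by linarith⟩)
      (show b - π ∈ Icc 0 π from ⟨by linarith, by linarith⟩) (by linarith)
    simp only [cos_sub_pi] at this
    dsimp only
    linarith
  have hunion : Icc 0 π ∪ Ico π (2 * π) = Ico 0 (2 * π) :=
    Icc_union_Ico_eq_Ico pi_nonneg (by linarith [pi_pos])
  rw [← hunion]
  exact hlow.union hhigh (isGreatest_Icc pi_nonneg) (isLeast_Ico (by linarith [pi_pos]))

theorem dalg_eq_dalgOfAngle_adist (x : Pt) {r : Ray2} (hr : ‖r.dir‖ = 1) :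
    dalg x r = dalgOfAngle (adist x r) := by
  by_cases hx : x = r.apex
  · simp [dalg, adist, hx, dalgOfAngle]
  rw [dalg, adist, if_neg hx, if_neg hx]
  set v := x - r.apex
  have hv : v ≠ 0 := sub_ne_zero.2 hx
  have hw : ‖‖v‖⁻¹ • v‖ = 1 := norm_smul_inv_norm hv
  have hθ : stdOrient.oangle r.dir (‖v‖⁻¹ • v) = stdOrient.oangle r.dir v :=
    stdOrient.oangle_smul_right_of_pos _ _ (inv_pos.2 (norm_pos_iff.2 hv))
  have hcos : inner ℝ r.dir (‖v‖⁻¹ • v) = cos (angleIco (stdOrient.oangle r.dir v)) := by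
    rw [stdOrient.inner_eq_norm_mul_norm_mul_cos_oangle, hr, hw, hθ, ← Real.Angle.cos_coe,
      coe_angleIco, one_mul, one_mul]
  have hsin :
      stdOrient.areaForm r.dir (‖v‖⁻¹ • v) = sin (angleIco (stdOrient.oangle r.dir v)) := by
    rw [stdOrient.areaForm_eq_norm_mul_norm_mul_sin_oangle, hr, hw, hθ, ← Real.Angle.sin_coe,
      coe_angleIco, one_mul, one_mul]
  rw [hcos, hsin, dalgOfAngle]

/-- the algebraic distance induces the same comparisons as the angular
distance, for rays with unit direction vectors. -/
theorem stmt2 (r s : Ray2) (hr : ‖r.dir‖ = 1) (hs : ‖s.dir‖ = 1) :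
    ∀ x : Pt, adist x r < adist x s ↔ dalg x r < dalg x s := by
  intro x
  rw [dalg_eq_dalgOfAngle_adist x hr, dalg_eq_dalgOfAngle_adist x hs]
  exact (strictMonoOn_dalgOfAngle.lt_iff_lt (adist_mem_Ico x r) (adist_mem_Ico x s)).symm
end
end

section
/- Let r and s be rays in the plane with distinct apices P and Q whose supporting lines intersect in exactly one point I, and assume I ≠ P and I ≠ Q. Then for every affine line L in ℝ², the set { x ∈ L : x ≠ P, x ≠ Q, d∠(x, r) = d∠(x, s) } contains at most two points. -/
noncomputable section

open Real

/-- The supporting line of a ray: the line through `p` with direction `u`. -/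
def lineThrough (p u : Pt) : Set Pt := {x | ∃ t : ℝ, x = p + t • u}

instance : Module.Oriented ℝ Pt (Fin 2) := ⟨stdOrient⟩

lemma angleIco_coe (θ : Real.Angle) : ((angleIco θ : ℝ) : Real.Angle) = θ := by
  unfold angleIco
  split
  · exact θ.coe_toReal
  · rw [Real.Angle.coe_add, θ.coe_toReal, Real.Angle.coe_two_pi, add_zero]

lemma angleIco_inj {θ₁ θ₂ : Real.Angle} (h : angleIco θ₁ = angleIco θ₂) : θ₁ = θ₂ := by
  rw [← angleIco_coe θ₁, ← angleIco_coe θ₂, h]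

/-- for two rays with distinct apices whose supporting lines meet in exactly
one point distinct from both apices, any affine line contains at most two points (distinct
from the apices) equidistant to the two rays. -/
theorem stmt17 (r s : Ray2) (hr : r.dir ≠ 0) (hs : s.dir ≠ 0) (hPQ : r.apex ≠ s.apex)
    (I : Pt) (hI : lineThrough r.apex r.dir ∩ lineThrough s.apex s.dir = {I})
    (hIP : I ≠ r.apex) (hIQ : I ≠ s.apex)
    (a d : Pt) (hd : d ≠ 0) :
    ({x : Pt | (∃ t : ℝ, x = a + t • d) ∧ x ≠ r.apex ∧ x ≠ s.apex ∧
        adist x r = adist x s}).encard ≤ 2 := by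
  set S : Set Pt := {x : Pt | (∃ t : ℝ, x = a + t • d) ∧ x ≠ r.apex ∧ x ≠ s.apex ∧
      adist x r = adist x s} with hS
  by_contra hcon
  push_neg at hcon
  obtain ⟨T, hTsub, hT3⟩ := Set.exists_subset_encard_eq
    (show (3 : ℕ∞) ≤ S.encard from Order.add_one_le_of_lt hcon)
  rw [Set.encard_eq_three] at hT3
  obtain ⟨x₁, x₂, x₃, h12, h13, h23, rfl⟩ := hT3
  have hm1 : x₁ ∈ S := hTsub (by simp)
  have hm2 : x₂ ∈ S := hTsub (by simp)
  have hm3 : x₃ ∈ S := hTsub (by simp)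
  set c : Real.Angle := stdOrient.oangle s.dir r.dir with hcdef
  -- key computation
  have key : ∀ x : Pt, x ∈ S → EuclideanGeometry.oangle s.apex x r.apex = c := by
    rintro x ⟨-, hxP, hxQ, hadist⟩
    have hP : x - r.apex ≠ 0 := sub_ne_zero.2 hxP
    have hQ : x - s.apex ≠ 0 := sub_ne_zero.2 hxQ
    rw [adist, adist, if_neg hxP, if_neg hxQ] at hadist
    have h1 : stdOrient.oangle r.dir (x - r.apex) = stdOrient.oangle s.dir (x - s.apex) :=
      angleIco_inj hadist
    have e1 : stdOrient.oangle (x - s.apex) s.dir + stdOrient.oangle s.dir (x - r.apex)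
        = stdOrient.oangle (x - s.apex) (x - r.apex) := stdOrient.oangle_add hQ hs hP
    have e2 : stdOrient.oangle s.dir r.dir + stdOrient.oangle r.dir (x - r.apex)
        = stdOrient.oangle s.dir (x - r.apex) := stdOrient.oangle_add hs hr hP
    have e3 : stdOrient.oangle (x - s.apex) s.dir = - stdOrient.oangle s.dir (x - s.apex) :=
      stdOrient.oangle_rev _ _
    have e0 : EuclideanGeometry.oangle s.apex x r.apex
        = stdOrient.oangle (x - s.apex) (x - r.apex) := by
      have : EuclideanGeometry.oangle s.apex x r.apex
          = stdOrient.oangle (s.apex - x) (r.apex - x) := rfl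
      rw [this, show s.apex - x = -(x - s.apex) by abel, show r.apex - x = -(x - r.apex) by abel,
        stdOrient.oangle_neg_neg]
    rw [e0]
    rw [e3, ← h1, ← e2] at e1
    rw [← e1]
    abel
  -- c is neither 0 nor π
  have hli : LinearIndependent ℝ ![s.dir, r.dir] := by
    rw [linearIndependent_fin2]
    refine ⟨hr, fun k hk => ?_⟩
    simp only [Matrix.cons_val_one, Matrix.head_cons, Matrix.cons_val_zero] at hk
    have hIin : I ∈ lineThrough r.apex r.dir ∩ lineThrough s.apex s.dir := by
      rw [hI]; rfl
    obtain ⟨⟨t, hIr⟩, ⟨t', hIs⟩⟩ := hIin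
    have hk0 : k ≠ 0 := by
      rintro rfl
      rw [zero_smul] at hk
      exact hs hk.symm
    have hsub : lineThrough s.apex s.dir ⊆ lineThrough r.apex r.dir := by
      rintro x ⟨τ, rfl⟩
      refine ⟨t - t' * k + τ * k, ?_⟩
      have h1 : s.apex = r.apex + t • r.dir - t' • s.dir := by rw [← hIr, hIs]; abel
      rw [h1, ← hk]
      match_scalars <;> ring
    have hQmem : s.apex ∈ ({I} : Set Pt) := by
      rw [← hI]
      exact ⟨hsub ⟨0, by simp⟩, ⟨0, by simp⟩⟩
    exact hIQ hQmem.symm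
  have hc0 : ¬(c = 0 ∨ c = π) := fun h =>
    (stdOrient.oangle_eq_zero_or_eq_pi_iff_not_linearIndependent.1 h) hli
  -- non-collinearity of {Q, x, P} for x ∈ S
  have hncol : ∀ x : Pt, x ∈ S → ¬Collinear ℝ ({s.apex, x, r.apex} : Set Pt) := by
    intro x hx h
    exact hc0 (key x hx ▸ EuclideanGeometry.oangle_eq_zero_or_eq_pi_iff_collinear.2 h)
  -- cospherical quadruples
  have hang : ∀ x y : Pt, x ∈ S → y ∈ S →
      (2 : ℤ) • EuclideanGeometry.oangle s.apex x r.apex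
        = (2 : ℤ) • EuclideanGeometry.oangle s.apex y r.apex := by
    intro x y hx hy
    rw [key x hx, key y hy]
  have C12 : EuclideanGeometry.Cospherical ({s.apex, x₁, x₂, r.apex} : Set Pt) :=
    EuclideanGeometry.cospherical_of_two_zsmul_oangle_eq_of_not_collinear
      (hang x₁ x₂ hm1 hm2) (hncol x₁ hm1)
  have C13 : EuclideanGeometry.Cospherical ({s.apex, x₁, x₃, r.apex} : Set Pt) :=
    EuclideanGeometry.cospherical_of_two_zsmul_oangle_eq_of_not_collinear
      (hang x₁ x₃ hm1 hm3) (hncol x₁ hm1)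
  -- the triangle Q x₁ P and its circumsphere
  have hAI : AffineIndependent ℝ ![s.apex, x₁, r.apex] :=
    affineIndependent_iff_not_collinear_set.2 (hncol x₁ hm1)
  set T : Affine.Triangle ℝ Pt := ⟨![s.apex, x₁, r.apex], hAI⟩ with hTdef
  have hspan : affineSpan ℝ (Set.range T.points) = ⊤ := by
    rw [T.independent.affineSpan_eq_top_iff_card_eq_finrank_add_one]
    simp [finrank_euclideanSpace_fin]
  obtain ⟨c₁, R₁, hd₁⟩ := C12
  obtain ⟨c₂, R₂, hd₂⟩ := C13
  have hdist₁ : ∀ i, dist (T.points i) c₁ = R₁ := by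
    intro i
    fin_cases i
    · exact hd₁ s.apex (by simp)
    · exact hd₁ x₁ (by simp)
    · exact hd₁ r.apex (by simp)
  have hdist₂ : ∀ i, dist (T.points i) c₂ = R₂ := by
    intro i
    fin_cases i
    · exact hd₂ s.apex (by simp)
    · exact hd₂ x₁ (by simp)
    · exact hd₂ r.apex (by simp)
  have hc₁ : c₁ = T.circumcenter :=
    T.eq_circumcenter_of_dist_eq (by rw [hspan]; trivial) hdist₁
  have hR₁ : R₁ = T.circumradius :=
    T.eq_circumradius_of_dist_eq (by rw [hspan]; trivial) hdist₁
  have hc₂ : c₂ = T.circumcenter :=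
    T.eq_circumcenter_of_dist_eq (by rw [hspan]; trivial) hdist₂
  have hR₂ : R₂ = T.circumradius :=
    T.eq_circumradius_of_dist_eq (by rw [hspan]; trivial) hdist₂
  -- the three points on L are cospherical
  have C3 : EuclideanGeometry.Cospherical ({x₁, x₂, x₃} : Set Pt) := by
    refine ⟨T.circumcenter, T.circumradius, ?_⟩
    intro p hp
    simp only [Set.mem_insert_iff, Set.mem_singleton_iff] at hp
    rcases hp with rfl | rfl | rfl
    · rw [← hc₁, ← hR₁]; exact hd₁ p (by simp)
    · rw [← hc₁, ← hR₁]; exact hd₁ p (by simp)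
    · rw [← hc₂, ← hR₂]; exact hd₂ p (by simp)
  have haff : AffineIndependent ℝ ![x₁, x₂, x₃] :=
    C3.affineIndependent_of_ne h12 h13 h23
  -- but they are collinear
  have hline : Collinear ℝ ({x : Pt | ∃ t : ℝ, x = a + t • d}) := by
    rw [collinear_iff_of_mem (show a ∈ {x : Pt | ∃ t : ℝ, x = a + t • d} from ⟨0, by simp⟩)]
    refine ⟨d, ?_⟩
    rintro p ⟨t, rfl⟩
    exact ⟨t, by rw [vadd_eq_add, add_comm]⟩
  have hcoll3 : Collinear ℝ ({x₁, x₂, x₃} : Set Pt) := by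
    refine hline.subset ?_
    rintro p (rfl | rfl | rfl)
    exacts [hm1.1, hm2.1, hm3.1]
  exact (affineIndependent_iff_not_collinear_set.1 haff) hcoll3
end
end
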